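/- arXiv:2501.13273 — 2 statements merged into one kernel-verified Lean document; each statement's English description precedes it below -/
import Mathlib

section
/- Let q be a probability density, S a measurable set with z := P_q(S) ≥ 1/2, and let q̃ be the normalized restriction of q to S. Then for any density p, KL(q̃‖p) ≤ 2(KL(q‖p) + 1). -/
open MeasureTheory Classical

lemma aux_neg_div_exp_le_mul_log (a b : ℝ) (ha : 0 ≤ a) (hb : 0 ≤ b) :
    -(b / Real.exp 1) ≤ a * Real.log (a / b) := by
  rcases eq_or_lt_of_le hb with h | hb
  · simp [← h]
  rcases eq_or_lt_of_le ha with h | ha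
  · simp [← h]
    positivity
  · have he : (0:ℝ) < Real.exp 1 := Real.exp_pos 1
    have h1 : Real.log (b / (a * Real.exp 1)) ≤ b / (a * Real.exp 1) - 1 :=
      Real.log_le_sub_one_of_pos (by positivity)
    have h2 : Real.log (b / (a * Real.exp 1)) = Real.log b - Real.log a - 1 := by
      rw [Real.log_div (ne_of_gt hb) (by positivity),
        Real.log_mul (ne_of_gt ha) (by positivity), Real.log_exp]
      ring
    have h3 : Real.log (a / b) = Real.log a - Real.log b :=
      Real.log_div (ne_of_gt ha) (ne_of_gt hb)
    have h4 : a * (Real.log b - Real.log a) ≤ a * (b / (a * Real.exp 1)) :=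
      mul_le_mul_of_nonneg_left (by linarith) ha.le
    have h5 : a * (b / (a * Real.exp 1)) = b / Real.exp 1 := by
      field_simp
    rw [h3]
    nlinarith [h4, h5]

/-- If `q̃` is the density `q` restricted to a set `S` of `q`-probability
`z ≥ 1/2` and renormalized, then for any density `p`,
`KL(q̃‖p) ≤ 2·(KL(q‖p) + 1)`. -/
theorem kl_restricted_le {α : Type*} [MeasurableSpace α] (μ : Measure α)
    (p q : α → ℝ) (hp : Measurable p) (hq : Measurable q)
    (S : Set α) (hS : MeasurableSet S) (z : ℝ)
    (hz : z = ∫ x in S, q x ∂μ) (hz2 : 1 / 2 ≤ z)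
    (hq0 : ∀ x, 0 ≤ q x) (hqint : Integrable q μ) (hq1 : ∫ x, q x ∂μ = 1)
    (hp0 : ∀ x, 0 ≤ p x) (hpint : Integrable p μ) (hp1 : ∫ x, p x ∂μ = 1)
    (qt qtc : α → ℝ)
    (hqt : qt = fun x => if x ∈ S then q x / z else 0)
    (hqtc : qtc = fun x => if x ∈ S then 0 else q x / (1 - z))
    (h1 : Integrable (fun x => q x * Real.log (q x / p x)) μ)
    (h2 : Integrable (fun x => qt x * Real.log (qt x / p x)) μ)
    (h3 : Integrable (fun x => qtc x * Real.log (qtc x / p x)) μ) :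
    ∫ x, qt x * Real.log (qt x / p x) ∂μ ≤
      2 * ((∫ x, q x * Real.log (q x / p x) ∂μ) + 1) := by
  clear h3 hqtc qtc
  have hzpos : 0 < z := lt_of_lt_of_le (by norm_num) hz2
  have hz1 : z ≤ 1 := by
    rw [hz, ← hq1]
    exact setIntegral_le_integral hqint (Filter.Eventually.of_forall hq0)
  have hlogz : Real.log z ≤ 0 := Real.log_nonpos hzpos.le hz1
  have he : (0:ℝ) < Real.exp 1 := Real.exp_pos 1
  set e1 := Real.exp 1 with he1
  set KL := ∫ x, q x * Real.log (q x / p x) ∂μ with hKL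
  set I1 := ∫ x, qt x * Real.log (qt x / p x) ∂μ with hI1
  set g : α → ℝ := fun y => q y * Real.log (q y / p y) - Real.log z * q y with hg
  -- pointwise key inequality
  have key : ∀ x, z * (qt x * Real.log (qt x / p x)) ≤ S.indicator g x := by
    intro x
    by_cases hx : x ∈ S
    · rw [Set.indicator_of_mem hx, hg]
      rw [hqt]
      simp only [if_pos hx]
      rcases eq_or_lt_of_le (hq0 x) with hqx | hqx
      · rw [← hqx]
        simp
      rcases eq_or_lt_of_le (hp0 x) with hpx | hpx
      · rw [← hpx, div_zero, Real.log_zero, div_zero, Real.log_zero]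
        have : Real.log z * q x ≤ 0 :=
          mul_nonpos_of_nonpos_of_nonneg hlogz (hq0 x)
        nlinarith
      · have hzne : z ≠ 0 := ne_of_gt hzpos
        have hdd : q x / z / p x = q x / p x / z := div_right_comm _ _ _
        rw [hdd, Real.log_div (div_ne_zero (ne_of_gt hqx) (ne_of_gt hpx)) hzne]
        apply le_of_eq
        field_simp
    · rw [Set.indicator_of_notMem hx, hqt]
      simp [if_neg hx]
  -- integrability of indicator
  have hgint : Integrable (S.indicator g) μ :=
    (h1.sub (hqint.const_mul (Real.log z))).indicator hS
  -- step 1: integrated inequality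
  have step1 : z * I1 ≤ (∫ x in S, q x * Real.log (q x / p x) ∂μ) - Real.log z * z := by
    have e1' : z * I1 = ∫ x, z * (qt x * Real.log (qt x / p x)) ∂μ :=
      (integral_const_mul z _).symm
    have e2 : (∫ x, S.indicator g x ∂μ) = ∫ x in S, g x ∂μ := integral_indicator hS
    have e3 : (∫ x in S, g x ∂μ)
        = (∫ x in S, q x * Real.log (q x / p x) ∂μ) - ∫ x in S, Real.log z * q x ∂μ := by
      rw [hg]
      exact integral_sub (h1.restrict) ((hqint.restrict).const_mul _)
    have e4 : (∫ x in S, Real.log z * q x ∂μ) = Real.log z * z := by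
      rw [integral_const_mul, ← hz]
    have hmono : (∫ x, z * (qt x * Real.log (qt x / p x)) ∂μ) ≤ ∫ x, S.indicator g x ∂μ :=
      integral_mono (h2.const_mul z) hgint key
    rw [e1']
    calc (∫ x, z * (qt x * Real.log (qt x / p x)) ∂μ)
        ≤ ∫ x, S.indicator g x ∂μ := hmono
      _ = (∫ x in S, q x * Real.log (q x / p x) ∂μ) - Real.log z * z := by
          rw [e2, e3, e4]
  -- lower bounds via -(p/e)
  have hptwise : ∀ x, -(p x / e1) ≤ q x * Real.log (q x / p x) := fun x =>
    aux_neg_div_exp_le_mul_log (q x) (p x) (hq0 x) (hp0 x)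
  have hpc : (∫ x in Sᶜ, p x ∂μ) ≤ 1 := by
    rw [← hp1]
    exact setIntegral_le_integral hpint (Filter.Eventually.of_forall hp0)
  -- lower bound for the integral over Sᶜ
  have hlow : -(1 / e1) ≤ ∫ x in Sᶜ, q x * Real.log (q x / p x) ∂μ := by
    have hm : (∫ x in Sᶜ, -(p x / e1) ∂μ) ≤ ∫ x in Sᶜ, q x * Real.log (q x / p x) ∂μ :=
      integral_mono ((hpint.restrict).div_const e1).neg (h1.restrict) (fun x => hptwise x)
    have hcalc : (∫ x in Sᶜ, -(p x / e1) ∂μ) = -((∫ x in Sᶜ, p x ∂μ) / e1) := by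
      rw [integral_neg, integral_div]
    have : -(1 / e1) ≤ ∫ x in Sᶜ, -(p x / e1) ∂μ := by
      rw [hcalc]
      have : (∫ x in Sᶜ, p x ∂μ) / e1 ≤ 1 / e1 := by gcongr
      linarith
    linarith
  -- lower bound for KL itself
  have hKLlow : -(1 / e1) ≤ KL := by
    have hm : (∫ x, -(p x / e1) ∂μ) ≤ KL :=
      integral_mono (hpint.div_const e1).neg h1 (fun x => hptwise x)
    have hcalc : (∫ x, -(p x / e1) ∂μ) = -(1 / e1) := by
      rw [integral_neg, integral_div, hp1]
    linarith
  -- split KL over S and Sᶜ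
  have hsplit : (∫ x in S, q x * Real.log (q x / p x) ∂μ)
      + (∫ x in Sᶜ, q x * Real.log (q x / p x) ∂μ) = KL :=
    integral_add_compl hS h1
  have hSbound : (∫ x in S, q x * Real.log (q x / p x) ∂μ) ≤ KL + 1 / e1 := by
    linarith
  have step2 : z * I1 ≤ KL + 1 / e1 - Real.log z * z := by linarith
  -- numeric facts
  have hlog2 : Real.log 2 < 0.6931471808 := Real.log_two_lt_d9
  have hexp : (2.7182818283:ℝ) < e1 := Real.exp_one_gt_d9
  have hlz : -Real.log 2 ≤ Real.log z := by
    have h := Real.log_le_log (by norm_num : (0:ℝ) < 1/2) hz2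
    rw [one_div, Real.log_inv] at h
    linarith
  have hinv : (1:ℝ) / e1 < 0.368 := by
    rw [div_lt_iff₀ he]
    nlinarith
  have hE : 2 * (1 / e1) + Real.log 2 - 2 ≤ 0 := by linarith
  have hF : z * (2 * (1 / e1) + Real.log 2 - 2) ≤ 0 :=
    mul_nonpos_of_nonneg_of_nonpos hzpos.le hE
  have hB' : -(Real.log z * z) ≤ z * Real.log 2 := by
    nlinarith [mul_le_mul_of_nonneg_left hlz hzpos.le]
  have hA : 0 ≤ (2 * z - 1) * (KL + 1 / e1) := by
    apply mul_nonneg <;> linarith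
  -- final combination
  have final : KL + 1 / e1 - Real.log z * z ≤ z * (2 * (KL + 1)) := by
    nlinarith [hA, hF, hB']
  have : z * I1 ≤ z * (2 * (KL + 1)) := le_trans step2 final
  exact le_of_mul_le_mul_left (by linarith) hzpos
end

section
/- Let f_w(x) = W_n φ(W_{n−1} ⋯ φ(W_1 x)⋯) be an n-layer feedforward network with ReLU activation φ and weight matrices W_1,…,W_n, and let f_{w+u} be the same network with perturbed weights W_l + U_l, where ‖U_l‖₂ ≤ (1/n)‖W_l‖₂ for every l. Then for every input x with ‖x‖₂ ≤ B: ‖f_{w+u}(x) − f_w(x)‖₂ ≤ e·B·(∏_{l=1}^n ‖W_l‖₂)·Σ_{l=1}^n ‖U_l‖₂/‖W_l‖₂. -/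
/-!
Let `d_l` be the distance between the pre-activations of the perturbed and the original network
after `l` layers. Since `(W + U) φ(p') - W φ(p) = (W + U) (φ(p') - φ(p)) + U φ(p)` and `φ` is
1-Lipschitz with `φ(0) = 0`, one gets
`d_{l+1} ≤ (1 + 1/n) ‖W_{l+1}‖ d_l + ‖U_{l+1}‖ B ∏_{j ≤ l} ‖W_j‖`.
Unrolling this recursion gives `d_n ≤ (1 + 1/n)^n B (∏_j ‖W_j‖) ∑_j ‖U_j‖ / ‖W_j‖`,
and `(1 + 1/n)^n ≤ e`.
-/

/-- Coordinatewise ReLU. -/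
def relu {h : ℕ} (v : Fin h → ℝ) : Fin h → ℝ := fun i => max (v i) 0

/-- Euclidean norm of a vector. -/
noncomputable def enormVec {h : ℕ} (v : Fin h → ℝ) : ℝ := Real.sqrt (∑ i, v i ^ 2)

/-- Spectral norm of a real matrix. -/
noncomputable def spectralNormMat {m n : ℕ} (A : Matrix (Fin m) (Fin n) ℝ) : ℝ :=
  ‖LinearMap.toContinuousLinearMap (Matrix.toEuclideanLin A)‖

/-- Pre-activation output `f^{(l)}` of an `l`-layer ReLU network:
`f^{(0)}(x) = x`, `f^{(1)}(x) = W₁ x`, `f^{(l+1)}(x) = W_{l+1} φ(f^{(l)}(x))`. -/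
noncomputable def preact {h : ℕ} (W : ℕ → Matrix (Fin h) (Fin h) ℝ)
    (x : Fin h → ℝ) : ℕ → (Fin h → ℝ)
  | 0 => x
  | 1 => (W 1).mulVec x
  | (l + 2) => (W (l + 2)).mulVec (relu (preact W x (l + 1)))

open Finset Matrix

section Norms

variable {m k h : ℕ}

lemma enormVec_eq_norm_toLp (v : Fin h → ℝ) : enormVec v = ‖WithLp.toLp 2 v‖ := by
  simp [enormVec, EuclideanSpace.norm_eq]

lemma enormVec_nonneg (v : Fin h → ℝ) : 0 ≤ enormVec v := Real.sqrt_nonneg _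

lemma enormVec_add_le (v w : Fin h → ℝ) : enormVec (v + w) ≤ enormVec v + enormVec w := by
  simpa only [enormVec_eq_norm_toLp, WithLp.toLp_add] using norm_add_le _ _

lemma spectralNormMat_nonneg (A : Matrix (Fin m) (Fin k) ℝ) : 0 ≤ spectralNormMat A :=
  norm_nonneg _

lemma spectralNormMat_add_le (A B : Matrix (Fin m) (Fin k) ℝ) :
    spectralNormMat (A + B) ≤ spectralNormMat A + spectralNormMat B := by
  simpa only [spectralNormMat, map_add] using norm_add_le _ _

lemma enormVec_mulVec_le (A : Matrix (Fin m) (Fin k) ℝ) (v : Fin k → ℝ) :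
    enormVec (A *ᵥ v) ≤ spectralNormMat A * enormVec v := by
  rw [enormVec_eq_norm_toLp, enormVec_eq_norm_toLp]
  exact (LinearMap.toContinuousLinearMap (toEuclideanLin A)).le_opNorm _

lemma enormVec_mulVec_sub_mulVec_le (A A' : Matrix (Fin m) (Fin k) ℝ) (v v' : Fin k → ℝ) :
    enormVec (A' *ᵥ v' - A *ᵥ v) ≤
      spectralNormMat A' * enormVec (v' - v) + spectralNormMat (A' - A) * enormVec v := by
  have hsplit : A' *ᵥ v' - A *ᵥ v = A' *ᵥ (v' - v) + (A' - A) *ᵥ v := by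
    rw [mulVec_sub, sub_mulVec]
    abel
  rw [hsplit]
  exact (enormVec_add_le _ _).trans
    (add_le_add (enormVec_mulVec_le _ _) (enormVec_mulVec_le _ _))

lemma enormVec_relu_sub_relu_le (v w : Fin h → ℝ) :
    enormVec (relu v - relu w) ≤ enormVec (v - w) := by
  refine Real.sqrt_le_sqrt (sum_le_sum fun i _ => sq_le_sq.2 ?_)
  exact abs_max_sub_max_le_abs _ _ _

lemma enormVec_relu_le (v : Fin h → ℝ) : enormVec (relu v) ≤ enormVec v := by
  have hrelu_zero : relu (0 : Fin h → ℝ) = 0 := funext fun _ => max_self 0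
  simpa [hrelu_zero] using enormVec_relu_sub_relu_le v 0

end Norms

section Network

variable {h : ℕ} (W W' : ℕ → Matrix (Fin h) (Fin h) ℝ) (x : Fin h → ℝ)

/-- The input of layer `l + 1`, so that `preact W x (l + 1) = W (l + 1) *ᵥ layerInput W x l`. -/
noncomputable def layerInput : ℕ → Fin h → ℝ
  | 0 => x
  | l + 1 => relu (preact W x (l + 1))

lemma preact_succ (l : ℕ) : preact W x (l + 1) = W (l + 1) *ᵥ layerInput W x l := by
  cases l <;> rfl

lemma enormVec_layerInput_le (l : ℕ) : enormVec (layerInput W x l) ≤ enormVec (preact W x l) := by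
  cases l with
  | zero => exact le_rfl
  | succ l => exact enormVec_relu_le _

lemma enormVec_layerInput_sub_le (l : ℕ) :
    enormVec (layerInput W' x l - layerInput W x l) ≤ enormVec (preact W' x l - preact W x l) := by
  cases l with
  | zero => exact le_rfl
  | succ l => exact enormVec_relu_sub_relu_le _ _

lemma enormVec_preact_le (l : ℕ) :
    enormVec (preact W x l) ≤ enormVec x * ∏ j ∈ Icc 1 l, spectralNormMat (W j) := by
  induction l with
  | zero => simp [preact]
  | succ l ih =>
    rw [preact_succ, prod_Icc_succ_top (Nat.le_add_left 1 l), ← mul_assoc,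
      mul_comm _ (spectralNormMat _)]
    exact (enormVec_mulVec_le _ _).trans <| mul_le_mul_of_nonneg_left
      ((enormVec_layerInput_le W x l).trans ih) (spectralNormMat_nonneg _)

lemma enormVec_preact_sub_succ_le (l : ℕ) :
    enormVec (preact W' x (l + 1) - preact W x (l + 1)) ≤
      spectralNormMat (W' (l + 1)) * enormVec (preact W' x l - preact W x l) +
        spectralNormMat (W' (l + 1) - W (l + 1)) * enormVec (preact W x l) := by
  rw [preact_succ, preact_succ]
  refine (enormVec_mulVec_sub_mulVec_le _ _ _ _).trans (add_le_add ?_ ?_) <;>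
    refine mul_le_mul_of_nonneg_left ?_ (spectralNormMat_nonneg _)
  · exact enormVec_layerInput_sub_le W W' x l
  · exact enormVec_layerInput_le W x l

lemma enormVec_preact_add_sub_succ_le (U : ℕ → Matrix (Fin h) (Fin h) ℝ) (l : ℕ) {c r : ℝ}
    (hWU : spectralNormMat (W (l + 1) + U (l + 1)) ≤ c * spectralNormMat (W (l + 1)))
    (hU : spectralNormMat (U (l + 1)) ≤ spectralNormMat (W (l + 1)) * r) :
    enormVec (preact (fun l => W l + U l) x (l + 1) - preact W x (l + 1)) ≤
      c * spectralNormMat (W (l + 1)) * enormVec (preact (fun l => W l + U l) x l - preact W x l) +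
        spectralNormMat (W (l + 1)) * r * (enormVec x * ∏ j ∈ Icc 1 l, spectralNormMat (W j)) := by
  refine (enormVec_preact_sub_succ_le W (fun l => W l + U l) x l).trans (add_le_add ?_ ?_)
  · exact mul_le_mul_of_nonneg_right hWU (enormVec_nonneg _)
  · rw [add_sub_cancel_left]
    exact mul_le_mul hU (enormVec_preact_le W x l) (enormVec_nonneg _)
      ((spectralNormMat_nonneg _).trans hU)

end Network

lemma le_pow_mul_prod_mul_sum {n : ℕ} {c K : ℝ} {a r d : ℕ → ℝ} (hc : 1 ≤ c) (hK : 0 ≤ K)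
    (ha : ∀ l, 0 ≤ a l) (hr : ∀ l, 0 ≤ r l) (hd : d 0 ≤ 0)
    (hstep : ∀ l < n,
      d (l + 1) ≤ c * a (l + 1) * d l + a (l + 1) * r (l + 1) * (K * ∏ j ∈ Icc 1 l, a j)) :
    d n ≤ c ^ n * K * (∏ j ∈ Icc 1 n, a j) * ∑ j ∈ Icc 1 n, r j := by
  induction n with
  | zero => simpa using hd
  | succ l ih =>
    have hP : 0 ≤ K * ∏ j ∈ Icc 1 l, a j := mul_nonneg hK (prod_nonneg fun j _ => ha j)
    have hcl : 1 ≤ c ^ (l + 1) := one_le_pow₀ hc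
    rw [prod_Icc_succ_top (Nat.le_add_left 1 l), sum_Icc_succ_top (Nat.le_add_left 1 l)]
    calc d (l + 1)
        ≤ c * a (l + 1) * d l + a (l + 1) * r (l + 1) * (K * ∏ j ∈ Icc 1 l, a j) :=
          hstep l (Nat.lt_succ_self l)
      _ ≤ c * a (l + 1) * (c ^ l * K * (∏ j ∈ Icc 1 l, a j) * ∑ j ∈ Icc 1 l, r j) +
            c ^ (l + 1) * (a (l + 1) * r (l + 1) * (K * ∏ j ∈ Icc 1 l, a j)) := by
        refine add_le_add (mul_le_mul_of_nonneg_left ?_ ?_) (le_mul_of_one_le_left ?_ hcl)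
        · exact ih fun j hj => hstep j (hj.trans (Nat.lt_succ_self l))
        · exact mul_nonneg (zero_le_one.trans hc) (ha _)
        · exact mul_nonneg (mul_nonneg (ha _) (hr _)) hP
      _ = _ := by ring

theorem network_perturbation_bound_general (n h : ℕ) (B : ℝ)
    (W U : ℕ → Matrix (Fin h) (Fin h) ℝ)
    (hU : ∀ l ∈ Finset.Icc 1 n,
      spectralNormMat (U l) ≤ (1 / (n : ℝ)) * spectralNormMat (W l))
    (x : Fin h → ℝ) (hx : enormVec x ≤ B) :
    enormVec (fun i => preact (fun l => W l + U l) x n i - preact W x n i) ≤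
      Real.exp 1 * B * (∏ l ∈ Finset.Icc 1 n, spectralNormMat (W l)) *
        ∑ l ∈ Finset.Icc 1 n, spectralNormMat (U l) / spectralNormMat (W l) := by
  have hc : (1 : ℝ) ≤ 1 + (n : ℝ)⁻¹ := le_add_of_nonneg_right (by positivity)
  have hstep : ∀ l < n,
      enormVec (preact (fun l => W l + U l) x (l + 1) - preact W x (l + 1)) ≤
        (1 + (n : ℝ)⁻¹) * spectralNormMat (W (l + 1)) *
            enormVec (preact (fun l => W l + U l) x l - preact W x l) +
          spectralNormMat (W (l + 1)) *
              (spectralNormMat (U (l + 1)) / spectralNormMat (W (l + 1))) * (enormVec x * ∏ j ∈ Icc 1 l, spectralNormMat (W j)) := by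
    intro l hl
    have hUl := hU (l + 1) (mem_Icc.2 ⟨Nat.le_add_left 1 l, hl⟩)
    rw [one_div] at hUl
    refine enormVec_preact_add_sub_succ_le W x U l ?_ ?_
    · linarith [spectralNormMat_add_le (W (l + 1)) (U (l + 1))]
    -- a layer of norm zero has a zero perturbation, so no division junk arises
    · exact (mul_div_cancel_of_imp' fun hW0 =>
        le_antisymm (by simpa [hW0] using hUl) (spectralNormMat_nonneg _)).ge
  have hdiff := le_pow_mul_prod_mul_sum
    (d := fun l => enormVec (preact (fun l => W l + U l) x l - preact W x l)) hc
    (enormVec_nonneg x) (fun l => spectralNormMat_nonneg (W l))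
    (fun l => div_nonneg (spectralNormMat_nonneg (U l)) (spectralNormMat_nonneg (W l)))
    (by simp [preact, enormVec]) hstep
  refine hdiff.trans ?_
  gcongr
  · exact sum_nonneg fun j _ => div_nonneg (spectralNormMat_nonneg _) (spectralNormMat_nonneg _)
  · exact prod_nonneg fun j _ => spectralNormMat_nonneg _
  · exact enormVec_nonneg x
  · exact Real.one_add_inv_pow_le_exp

/-- Perturbation bound for ReLU networks (Neyshabur et al.): if each layer
perturbation satisfies `‖U_l‖₂ ≤ (1/n)·‖W_l‖₂`, then for every input `x` with
`‖x‖₂ ≤ B`,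
`‖f_{w+u}(x) − f_w(x)‖₂ ≤ e·B·(∏_l ‖W_l‖₂)·Σ_l ‖U_l‖₂/‖W_l‖₂`. -/
theorem network_perturbation_bound (n h : ℕ) (B : ℝ)
    (W U : ℕ → Matrix (Fin h) (Fin h) ℝ)
    (hWpos : ∀ l ∈ Finset.Icc 1 n, 0 < spectralNormMat (W l))
    (hU : ∀ l ∈ Finset.Icc 1 n,
      spectralNormMat (U l) ≤ (1 / (n : ℝ)) * spectralNormMat (W l))
    (x : Fin h → ℝ) (hx : enormVec x ≤ B) :
    enormVec (fun i => preact (fun l => W l + U l) x n i - preact W x n i) ≤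
      Real.exp 1 * B * (∏ l ∈ Finset.Icc 1 n, spectralNormMat (W l)) *
        ∑ l ∈ Finset.Icc 1 n, spectralNormMat (U l) / spectralNormMat (W l) :=
  network_perturbation_bound_general n h B W U hU x hx
end
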